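/- Let R be a finite commutative chain ring and A an r×n matrix over R with linearly independent rows. Then at least one r×r minor of A is a unit in R. -/

import Mathlib

/-!
Reducing modulo the maximal ideal `𝔪` turns `A` into a matrix over the residue field whose rows
are still linearly independent: if `∑ cᵢ Aᵢ ≡ 0 (mod 𝔪)`, multiplying by a nonzero `x` with
`x 𝔪 = 0` (it exists because `𝔪` is nilpotent) gives the relation `∑ (x cᵢ) Aᵢ = 0`, so every
`x cᵢ` vanishes and hence no `cᵢ` is a unit. Over the field some `r` columns are independent,
so the corresponding minor is nonzero there, and an element of a local ring whose residue is
nonzero is a unit.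
-/

open Module Submodule Matrix IsLocalRing

theorem Ideal.exists_ne_zero_forall_mul_eq_zero_of_isNilpotent {R : Type*} [CommRing R]
    [Nontrivial R] {I : Ideal R} (hI : IsNilpotent I) : ∃ x ≠ 0, ∀ y ∈ I, x * y = 0 := by
  obtain ⟨t, ht⟩ := hI
  induction t with
  | zero => exact absurd ht (by simp)
  | succ t ih =>
    by_cases hbot : I ^ t = 0
    · exact ih hbot
    obtain ⟨x, hxI, hx0⟩ := Submodule.exists_mem_ne_zero_of_ne_bot hbot
    refine ⟨x, hx0, fun y hy => ?_⟩
    have hxy : x * y ∈ I ^ (t + 1) := pow_succ I t ▸ Ideal.mul_mem_mul hxI hy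
    rwa [ht, Submodule.zero_eq_bot, Ideal.mem_bot] at hxy

theorem IsLocalRing.exists_ne_zero_forall_mul_maximalIdeal_eq_zero (R : Type*) [CommRing R]
    [IsLocalRing R] [IsArtinianRing R] : ∃ x ≠ 0, ∀ y ∈ maximalIdeal R, x * y = 0 := by
  refine Ideal.exists_ne_zero_forall_mul_eq_zero_of_isNilpotent ?_
  rw [← jacobson_eq_maximalIdeal ⊥ bot_ne_top]
  exact IsArtinianRing.isNilpotent_jacobson_bot

theorem Matrix.linearIndependent_map_residue {R ι κ : Type*} [CommRing R] [IsLocalRing R]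
    [IsArtinianRing R] [Fintype ι] {A : Matrix ι κ R} (hA : LinearIndependent R A) :
    LinearIndependent (ResidueField R) (A.map (residue R)) := by
  obtain ⟨x, hx0, hx⟩ := exists_ne_zero_forall_mul_maximalIdeal_eq_zero R
  refine Fintype.linearIndependent_iff.mpr fun c hc i => ?_
  choose d hd using fun i => residue_surjective (c i)
  have hcomb : ∀ j, ∑ i, d i * A i j ∈ maximalIdeal R := fun j => by
    rw [← residue_eq_zero_iff, map_sum]
    simpa [← hd] using congrFun hc j
  have hxd : ∀ i, x * d i = 0 := Fintype.linearIndependent_iff.mp hA (fun i => x * d i) <| by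
    ext j
    simpa [Finset.mul_sum, mul_assoc] using hx _ (hcomb j)
  have hdi : d i ∈ maximalIdeal R := fun hunit => hx0 (hunit.mul_left_eq_zero.mp (hxd i))
  rw [← hd, residue_eq_zero_iff]
  exact hdi

theorem exists_strictMono_linearIndependent_comp {K V : Type*} [DivisionRing K] [AddCommGroup V]
    [Module K V] {n r : ℕ} (v : Fin n → V) (hr : finrank K (span K (Set.range v)) = r) :
    ∃ g : Fin r → Fin n, StrictMono g ∧ LinearIndependent K (v ∘ g) := by
  classical
  obtain ⟨b, -, -, hspan, hb⟩ :=
    exists_linearIndepOn_extension (linearIndepOn_empty K v) (Set.empty_subset Set.univ)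
  have hspan_eq : span K (v '' b) = span K (Set.range v) :=
    le_antisymm (span_mono (Set.image_subset_range v b)) (span_le.mpr (by simpa using hspan))
  have hcard : b.toFinset.card = r := by
    rw [← hr, ← hspan_eq, Set.image_eq_range, finrank_span_eq_card hb, Set.toFinset_card]
  let g := b.toFinset.orderEmbOfFin hcard
  have hgb : ∀ i, g i ∈ b := fun i => Set.mem_toFinset.mp (b.toFinset.orderEmbOfFin_mem hcard i)
  refine ⟨g, g.strictMono, ?_⟩
  exact hb.comp (fun i => ⟨g i, hgb i⟩) fun i j hij => g.injective (congrArg Subtype.val hij :)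

theorem Matrix.exists_strictMono_isUnit_det_submatrix {K : Type*} [Field K] {r n : ℕ}
    {B : Matrix (Fin r) (Fin n) K} (hB : LinearIndependent K B) :
    ∃ g : Fin r → Fin n, StrictMono g ∧ IsUnit (B.submatrix id g).det := by
  have hr : finrank K (span K (Set.range B.col)) = r := by
    simpa [← rank_eq_finrank_span_cols] using hB.rank_matrix
  obtain ⟨g, hg, hli⟩ := exists_strictMono_linearIndependent_comp B.col hr
  exact ⟨g, hg, isUnit_iff_isUnit_det _ |>.mp (linearIndependent_cols_iff_isUnit.mp hli)⟩

theorem stmt13_general (R : Type*) [CommRing R] [Fintype R] [IsLocalRing R]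
    (r n : ℕ) (A : Matrix (Fin r) (Fin n) R) (hA : LinearIndependent R A) :
    ∃ g : Fin r → Fin n, StrictMono g ∧ IsUnit (A.submatrix id g).det := by
  obtain ⟨g, hg, hdet⟩ := exists_strictMono_isUnit_det_submatrix (linearIndependent_map_residue hA)
  refine ⟨g, hg, (isUnit_map_iff (residue R) _).mp ?_⟩
  rwa [RingHom.map_det]

/-- Over a finite commutative chain ring, a matrix with linearly independent
rows has at least one `r×r` minor which is a unit. -/
theorem stmt13 (R : Type*) [CommRing R] [Fintype R] [IsLocalRing R]
    [IsPrincipalIdealRing R]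
    (r n : ℕ) (A : Matrix (Fin r) (Fin n) R) (hA : LinearIndependent R A) :
    ∃ g : Fin r → Fin n, StrictMono g ∧ IsUnit (A.submatrix id g).det :=
  stmt13_general R r n A hA
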